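/- Let N ≥ 1, k ≥ 1 and t ≥ 1 be integers, let X be a finite set, and let A_1, …, A_N be subsets of X each of cardinality at least k. If k² > (t−1)·|X| and |A_i ∩ A_j| ≤ t − 1 for all i ≠ j, then N ≤ |X| · (k − (t−1)) / (k² − (t−1)·|X|). -/

import Mathlib

/-!
Double count incidences: with `d x` the number of sets containing `x`, `∑ d x = S := ∑ |A_i|` and
`∑ d x ^ 2 = ∑_{i,j} |A_i ∩ A_j| ≤ S + N (N - 1) (t - 1)`. Cauchy–Schwarz gives
`S ^ 2 ≤ |X| (S + N (N - 1) (t - 1))`, and since `S ≥ N k` this rearranges to Corrádi's bound.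
-/

open Finset

section DoubleCounting

variable {α ι : Type*} [DecidableEq α] [Fintype ι] {X : Finset α} {A : ι → Finset α}

theorem sum_card_filter_mem_eq_sum_card (hsub : ∀ i, A i ⊆ X) :
    ∑ x ∈ X, #{i | x ∈ A i} = ∑ i, #(A i) := by
  simp_rw [card_filter]
  rw [sum_comm]
  refine sum_congr rfl fun i _ => ?_
  rw [← card_filter, filter_mem_eq_inter, inter_eq_right.mpr (hsub i)]

theorem sum_sq_card_filter_mem_eq_sum_sum_card_inter (hsub : ∀ i, A i ⊆ X) :
    ∑ x ∈ X, #{i | x ∈ A i} ^ 2 = ∑ i, ∑ j, #(A i ∩ A j) := by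
  have hpairs : ∀ x, #{i | x ∈ A i} ^ 2 = #{p : ι × ι | x ∈ A p.1 ∩ A p.2} := by
    intro x
    rw [sq, ← card_product, ← filter_product, univ_product_univ]
    simp only [mem_inter]
  simp_rw [hpairs]
  rw [sum_card_filter_mem_eq_sum_card (A := fun p : ι × ι => A p.1 ∩ A p.2)
      fun p => inter_subset_left.trans (hsub p.1),
    Fintype.sum_prod_type]

theorem sum_sum_card_inter_le {l : ℕ} (hinter : ∀ i j, i ≠ j → #(A i ∩ A j) ≤ l) :
    ∑ i, ∑ j, #(A i ∩ A j) ≤ ∑ i, #(A i) + Fintype.card ι * (Fintype.card ι - 1) * l := by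
  classical
  have hrow : ∀ i, ∑ j, #(A i ∩ A j) ≤ #(A i) + (Fintype.card ι - 1) * l := by
    intro i
    rw [← add_sum_erase _ _ (mem_univ i), inter_self]
    gcongr
    calc ∑ j ∈ univ.erase i, #(A i ∩ A j) ≤ ∑ j ∈ univ.erase i, l :=
          sum_le_sum fun j hj => hinter i j (ne_of_mem_erase hj).symm
      _ = (Fintype.card ι - 1) * l := by
          rw [sum_const, card_erase_of_mem (mem_univ i), card_univ, smul_eq_mul]
  calc ∑ i, ∑ j, #(A i ∩ A j) ≤ ∑ i, (#(A i) + (Fintype.card ι - 1) * l) :=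
        sum_le_sum fun i _ => hrow i
    _ = _ := by rw [sum_add_distrib, sum_const, card_univ, smul_eq_mul, mul_assoc]

theorem sq_sum_card_le {l : ℕ} (hsub : ∀ i, A i ⊆ X)
    (hinter : ∀ i j, i ≠ j → #(A i ∩ A j) ≤ l) :
    (∑ i, #(A i)) ^ 2 ≤ #X * (∑ i, #(A i) + Fintype.card ι * (Fintype.card ι - 1) * l) :=
  calc (∑ i, #(A i)) ^ 2 = (∑ x ∈ X, #{i | x ∈ A i}) ^ 2 := by
        rw [sum_card_filter_mem_eq_sum_card hsub]
    _ ≤ #X * ∑ x ∈ X, #{i | x ∈ A i} ^ 2 := sq_sum_le_card_mul_sum_sq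
    _ ≤ _ := by
        rw [sum_sq_card_filter_mem_eq_sum_sum_card_inter hsub]
        exact Nat.mul_le_mul_left _ (sum_sum_card_inter_le hinter)

end DoubleCounting

theorem mul_sq_sub_le_of_sq_le {N S n k l : ℝ} (hN : 1 ≤ N) (hn : 0 ≤ n) (hk : 0 ≤ k)
    (hl : 0 ≤ l) (hS : N * k ≤ S) (hCS : S ^ 2 ≤ n * (S + N * (N - 1) * l)) :
    N * (k ^ 2 - l * n) ≤ n * (k - l) := by
  suffices k * (N * k - n) ≤ (N - 1) * n * l by nlinarith
  rcases le_or_gt (N * k) n with h | h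
  · nlinarith [mul_nonpos_of_nonneg_of_nonpos hk (sub_nonpos.2 h),
      mul_nonneg (mul_nonneg (sub_nonneg.2 hN) hn) hl]
  · have hSn : S * (S - n) ≤ N * ((N - 1) * n * l) := by nlinarith
    -- `s ↦ s (s - n)` is increasing for `s ≥ n / 2`, and here `n < N k ≤ S`.
    have hmono : N * k * (N * k - n) ≤ S * (S - n) := by nlinarith
    exact le_of_mul_le_mul_left (by nlinarith) (by linarith : (0 : ℝ) < N)

theorem card_mul_sq_sub_le {α ι : Type*} [DecidableEq α] [Fintype ι] [Nonempty ι]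
    {X : Finset α} {A : ι → Finset α} {k l : ℕ} (hsub : ∀ i, A i ⊆ X)
    (hcard : ∀ i, k ≤ #(A i)) (hinter : ∀ i j, i ≠ j → #(A i ∩ A j) ≤ l) :
    (Fintype.card ι : ℝ) * ((k : ℝ) ^ 2 - l * #X) ≤ #X * (k - l) := by
  have hS : (Fintype.card ι : ℝ) * k ≤ ∑ i, (#(A i) : ℝ) := by
    exact_mod_cast (by simpa using card_nsmul_le_sum univ (fun i => #(A i)) k fun i _ => hcard i)
  have hCS : (∑ i, (#(A i) : ℝ)) ^ 2
      ≤ #X * (∑ i, (#(A i) : ℝ) + Fintype.card ι * (Fintype.card ι - 1) * l) := by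
    have := sq_sum_card_le hsub hinter
    rw [← Nat.cast_le (α := ℝ)] at this
    push_cast [Nat.cast_pred Fintype.card_pos] at this
    exact this
  exact mul_sq_sub_le_of_sq_le (by exact_mod_cast Fintype.card_pos) (by positivity)
    (by positivity) (by positivity) hS hCS

theorem stmt_7_general {α : Type*} [DecidableEq α] (N k t : ℕ)
    (hN : 1 ≤ N) (ht : 1 ≤ t)
    (X : Finset α) (A : Fin N → Finset α)
    (hsub : ∀ i, A i ⊆ X) (hcard : ∀ i, k ≤ (A i).card)
    (hbig : (k : ℝ) ^ 2 > ((t : ℝ) - 1) * (X.card : ℝ))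
    (hinter : ∀ i j : Fin N, i ≠ j → (A i ∩ A j).card ≤ t - 1) :
    (N : ℝ) ≤ (X.card : ℝ) * ((k : ℝ) - ((t : ℝ) - 1))
      / ((k : ℝ) ^ 2 - ((t : ℝ) - 1) * (X.card : ℝ)) := by
  have : Nonempty (Fin N) := Fin.pos_iff_nonempty.mp hN
  have hcorradi := card_mul_sq_sub_le hsub hcard hinter
  rw [Fintype.card_fin, Nat.cast_pred ht] at hcorradi
  rwa [le_div_iff₀ (sub_pos.mpr hbig)]

theorem stmt_7 {α : Type*} [DecidableEq α] (N k t : ℕ)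
    (hN : 1 ≤ N) (hk : 1 ≤ k) (ht : 1 ≤ t)
    (X : Finset α) (A : Fin N → Finset α)
    (hsub : ∀ i, A i ⊆ X) (hcard : ∀ i, k ≤ (A i).card)
    (hbig : (k : ℝ) ^ 2 > ((t : ℝ) - 1) * (X.card : ℝ))
    (hinter : ∀ i j : Fin N, i ≠ j → (A i ∩ A j).card ≤ t - 1) :
    (N : ℝ) ≤ (X.card : ℝ) * ((k : ℝ) - ((t : ℝ) - 1))
      / ((k : ℝ) ^ 2 - ((t : ℝ) - 1) * (X.card : ℝ)) :=
  stmt_7_general N k t hN ht X A hsub hcard hbig hinter
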